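/- In the n=1 hermitian case over ℍ, the gamma factor of the trivial representation factors as a product of three Tate gamma factors: Γ_ℂ(-s+3/2)Γ_ℝ(-s+3/2)/(Γ_ℂ(s+3/2)Γ_ℝ(s+3/2)) = ∏_{j=-1}^{1} γ_ℝ(s+1/2+j), where γ_ℝ(s) := Γ_ℝ(1-s)/Γ_ℝ(s) is the real Tate gamma factor of the trivial character (for ψ(x)=e^{2πix}). -/
import Mathlib


open Real

/-- `Γ_ℝ(s) = π^{-s/2} Γ(s/2)`. -/
noncomputable def GammaR (s : ℂ) : ℂ := (π : ℂ) ^ (-s / 2) * Complex.Gamma (s / 2)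

/-- `Γ_ℂ(s) = 2 (2π)^{-s} Γ(s)`. -/
noncomputable def GammaC (s : ℂ) : ℂ := 2 * (2 * (π : ℂ)) ^ (-s) * Complex.Gamma s

/-- The real Tate γ-factor of the trivial character: `γ_ℝ(s) = Γ_ℝ(1-s)/Γ_ℝ(s)`. -/
noncomputable def gammaTateR (s : ℂ) : ℂ := GammaR (1 - s) / GammaR s

lemma piC_ne : (π : ℂ) ≠ 0 := by
  exact_mod_cast Real.pi_ne_zero

lemma GammaR_zero : GammaR 0 = 0 := by
  simp [GammaR, Complex.Gamma_zero]

lemma arg_ne {s : ℂ} (h : GammaR s ≠ 0) : s ≠ 0 := by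
  intro hs; rw [hs, GammaR_zero] at h; exact h rfl

/-- Shift: `Γ_ℝ(s+2) = (s/(2π)) Γ_ℝ(s)` for `s ≠ 0`. -/
lemma GammaR_shift (s : ℂ) (hs : s ≠ 0) :
    GammaR (s + 2) = s / (2 * (π : ℂ)) * GammaR s := by
  unfold GammaR
  rw [show (s + 2) / 2 = s / 2 + 1 by ring,
    Complex.Gamma_add_one _ (div_ne_zero hs two_ne_zero),
    show (-(s + 2) / 2 : ℂ) = -s / 2 + (-1) by ring,
    Complex.cpow_add _ _ piC_ne, Complex.cpow_neg_one]
  field_simp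

/-- Duplication: `Γ_ℂ(s) = Γ_ℝ(s) Γ_ℝ(s+1)`. -/
lemma GammaC_eq (s : ℂ) : GammaC s = GammaR s * GammaR (s + 1) := by
  unfold GammaC GammaR
  rw [show (s + 1) / 2 = s / 2 + 1 / 2 by ring]
  have hdup := Complex.Gamma_mul_Gamma_add_half (s / 2)
  rw [show 2 * (s / 2) = s by ring] at hdup
  have hsqrt : ((√π : ℝ) : ℂ) = (π : ℂ) ^ (1 / 2 : ℂ) := by
    rw [Real.sqrt_eq_rpow, Complex.ofReal_cpow Real.pi_pos.le]
    norm_num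
  symm
  calc (π:ℂ) ^ (-s / 2) * Complex.Gamma (s / 2) *
        ((π:ℂ) ^ (-(s + 1) / 2) * Complex.Gamma (s / 2 + 1 / 2))
      = (π:ℂ) ^ (-s / 2) * (π:ℂ) ^ (-(s + 1) / 2) *
        (Complex.Gamma (s / 2) * Complex.Gamma (s / 2 + 1 / 2)) := by ring
    _ = (π:ℂ) ^ (-s / 2) * (π:ℂ) ^ (-(s + 1) / 2) *
        (Complex.Gamma s * (2:ℂ) ^ (1 - s) * ((√π : ℝ) : ℂ)) := by rw [hdup]
    _ = 2 * (2 * (π : ℂ)) ^ (-s) * Complex.Gamma s := by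
        have hpi : (π:ℂ) ^ (-s / 2) * (π:ℂ) ^ (-(s + 1) / 2) * (π:ℂ) ^ (1 / 2 : ℂ)
            = (π:ℂ) ^ (-s) := by
          rw [← Complex.cpow_add _ _ piC_ne, ← Complex.cpow_add _ _ piC_ne,
            show (-s / 2 + -(s + 1) / 2 + 1 / 2 : ℂ) = -s by ring]
        have h2 : ((2:ℂ)) ^ (1 - s) = 2 * (2:ℂ) ^ (-s) := by
          rw [show (1 - s : ℂ) = 1 + (-s) by ring, Complex.cpow_add _ _ two_ne_zero,
            Complex.cpow_one]
        have h2pi : (2 * (π:ℂ)) ^ (-s) = (2:ℂ) ^ (-s) * (π:ℂ) ^ (-s) := by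
          rw [show (2 * (π:ℂ)) = ((2:ℝ):ℂ) * ((π:ℝ):ℂ) by norm_num,
            Complex.mul_cpow_ofReal_nonneg (by norm_num) Real.pi_pos.le]
          norm_num
        rw [hsqrt, h2, h2pi]
        linear_combination (2 * (2:ℂ) ^ (-s) * Complex.Gamma s) * hpi

set_option maxHeartbeats 1000000 in
/-- In the `n = 1` hermitian case over `ℍ`, the γ-factor of the trivial representation
factors as a product of three real Tate γ-factors:
`Γ_ℂ(-s+3/2)Γ_ℝ(-s+3/2)/(Γ_ℂ(s+3/2)Γ_ℝ(s+3/2)) = ∏_{j=-1}^{1} γ_ℝ(s+1/2+j)`,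
as an identity of meromorphic functions (stated wherever both sides are defined). -/
theorem stmt_12 (s : ℂ)
    (h1 : GammaR (s - 1/2) ≠ 0) (h2 : GammaR (s + 1/2) ≠ 0) (h3 : GammaR (s + 3/2) ≠ 0) :
    GammaC (-s + 3/2) * GammaR (-s + 3/2) / (GammaC (s + 3/2) * GammaR (s + 3/2)) =
      ∏ j ∈ Finset.Icc (-1 : ℤ) 1, gammaTateR (s + 1/2 + (j : ℂ)) := by
  have hs1 : s - 1/2 ≠ 0 := arg_ne h1
  have hs2 : s + 1/2 ≠ 0 := arg_ne h2
  have hn1 : (-1/2 - s : ℂ) ≠ 0 := fun h => hs2 (by linear_combination -h)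
  have hn2 : (1/2 - s : ℂ) ≠ 0 := fun h => hs1 (by linear_combination -h)
  have hprod : ∏ j ∈ Finset.Icc (-1 : ℤ) 1, gammaTateR (s + 1/2 + (j : ℂ)) =
      gammaTateR (s - 1/2) * gammaTateR (s + 1/2) * gammaTateR (s + 3/2) := by
    rw [show Finset.Icc (-1 : ℤ) 1 = {-1, 0, 1} by ext x; simp [Finset.mem_Icc]; omega]
    rw [Finset.prod_insert (by decide), Finset.prod_insert (by decide),
      Finset.prod_singleton]
    push_cast
    rw [show (s + 1/2 + -1 : ℂ) = s - 1/2 by ring, show (s + 1/2 + 0 : ℂ) = s + 1/2 by ring,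
      show (s + 1/2 + 1 : ℂ) = s + 3/2 by ring]
    ring
  rw [hprod]
  unfold gammaTateR
  rw [GammaC_eq, GammaC_eq]
  have e1 : GammaR (s + 3/2) = (s - 1/2) / (2 * (π:ℂ)) * GammaR (s - 1/2) := by
    rw [show (s + 3/2 : ℂ) = (s - 1/2) + 2 by ring, GammaR_shift _ hs1]
  have e2 : GammaR (s + 3/2 + 1) = (s + 1/2) / (2 * (π:ℂ)) * GammaR (s + 1/2) := by
    rw [show (s + 3/2 + 1 : ℂ) = (s + 1/2) + 2 by ring, GammaR_shift _ hs2]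
  have e3 : GammaR (-s + 3/2) = (-1/2 - s) / (2 * (π:ℂ)) * GammaR (-1/2 - s) := by
    rw [show (-s + 3/2 : ℂ) = (-1/2 - s) + 2 by ring, GammaR_shift _ hn1]
  have e4 : GammaR (-s + 3/2 + 1) = (1/2 - s) / (2 * (π:ℂ)) * GammaR (1/2 - s) := by
    rw [show (-s + 3/2 + 1 : ℂ) = (1/2 - s) + 2 by ring, GammaR_shift _ hn2]
  rw [e1, e2, e3, e4,
    show (1 - (s - 1/2) : ℂ) = (1/2 - s) + 1 by ring,
    show (1 - (s + 1/2) : ℂ) = 1/2 - s by ring,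
    show (1 - (s + 3/2) : ℂ) = -1/2 - s by ring,
    show ((1/2 - s) + 1 : ℂ) = (-1/2 - s) + 2 by ring, GammaR_shift _ hn1]
  have h2pi : (2 * (π:ℂ)) ≠ 0 := mul_ne_zero two_ne_zero piC_ne
  have hd1 : (s - 1/2) / (2*(π:ℂ)) * GammaR (s - 1/2) ≠ 0 :=
    mul_ne_zero (div_ne_zero hs1 h2pi) h1
  have hd2 : (s + 1/2) / (2*(π:ℂ)) * GammaR (s + 1/2) ≠ 0 :=
    mul_ne_zero (div_ne_zero hs2 h2pi) h2
  rw [div_mul_div_comm, div_mul_div_comm,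
    div_eq_div_iff (mul_ne_zero (mul_ne_zero hd1 hd2) hd1) (mul_ne_zero (mul_ne_zero h1 h2) hd1)]
  ring
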